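/- arXiv:1809.10284 — 7 statements merged into one kernel-verified Lean document; each statement's English description precedes it below -/
import Mathlib

section
/- Let B be a reflexive real Banach space with duality mapping J, Y ⊆ ℝ, and let E : ℝ^m × Y^m → ℝ and Ω : B → ℝ be an arbitrary error functional and regulariser satisfying the general assumption that minimisers of the relevant problems always exist. If the regularised interpolation problem satisfies the linear representer theorem (i.e. Ω is admissible), then for every m, all L₁,…,L_m ∈ B*, all y ∈ Y^m and every λ > 0 the regularisation problem min{E((L_i(f))_{i=1}^m, y) + λΩ(f) : f ∈ B} admits a minimiser f with Σ_{i=1}^m c_i L_i ∈ J(f) for some c₁,…,c_m ∈ ℝ. -/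
/-!
A minimiser `f₀` of the regularisation problem may be replaced by a solution `f` of the
interpolation problem with data `L f₀` that the representer theorem provides: the error term
only sees `L f = L f₀`, and `Ω f ≤ Ω f₀`.
-/

open scoped Classical

/-- The duality mapping of a real normed space `B` into its dual (gauge the identity):
`J(0) = {0}` and for `x ≠ 0`, `J(x) = {L : L x = ‖L‖‖x‖, ‖L‖ = ‖x‖}`. -/
noncomputable def dualityMap (B : Type*) [NormedAddCommGroup B] [NormedSpace ℝ B] (x : B) :
    Set (B →L[ℝ] ℝ) :=
  if x = 0 then {0} else {L : B →L[ℝ] ℝ | L x = ‖L‖ * ‖x‖ ∧ ‖L‖ = ‖x‖}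

/-- A normed space is reflexive if the canonical inclusion into its double dual is surjective. -/
def IsReflexive (B : Type*) [NormedAddCommGroup B] [NormedSpace ℝ B] : Prop :=
  Function.Surjective (NormedSpace.inclusionInDoubleDual ℝ B)

/-- `Ω` is admissible: every consistent regularised interpolation problem admits a solution
whose dual element lies in the span of the defining functionals. -/
def Admissible {B : Type*} [NormedAddCommGroup B] [NormedSpace ℝ B] (Ω : B → ℝ) : Prop :=
  ∀ (m : ℕ) (L : Fin m → (B →L[ℝ] ℝ)) (y : Fin m → ℝ),
    (∃ f : B, ∀ i, L i f = y i) →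
    ∃ f : B, (∀ i, L i f = y i) ∧
      (∀ g : B, (∀ i, L i g = y i) → Ω f ≤ Ω g) ∧
      ∃ c : Fin m → ℝ, (∑ i, c i • L i) ∈ dualityMap B f

theorem minimizer_of_eq_data_of_le {α β : Type*} (F : β → ℝ) (A : α → β) (Ω : α → ℝ)
    {lam : ℝ} (hlam : 0 ≤ lam) {f f₀ : α}
    (hf₀ : ∀ g, F (A f₀) + lam * Ω f₀ ≤ F (A g) + lam * Ω g)
    (hA : A f = A f₀) (hΩ : Ω f ≤ Ω f₀) :
    ∀ g, F (A f) + lam * Ω f ≤ F (A g) + lam * Ω g := fun g =>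
  calc F (A f) + lam * Ω f ≤ F (A f₀) + lam * Ω f₀ := by
        rw [hA]; gcongr
    _ ≤ F (A g) + lam * Ω g := hf₀ g

theorem interpolation_representer_implies_regularisation_representer_general
    {B : Type*} [NormedAddCommGroup B] [NormedSpace ℝ B]
    (Y : Set ℝ)
    (E : ∀ m : ℕ, (Fin m → ℝ) → (Fin m → ℝ) → ℝ)
    (Ω : B → ℝ)
    (hmin_exists : ∀ (m : ℕ) (L : Fin m → (B →L[ℝ] ℝ)) (y : Fin m → ℝ), (∀ i, y i ∈ Y) →
      ∀ lam : ℝ, 0 < lam →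
      ∃ f : B, ∀ g : B,
        E m (fun i => L i f) y + lam * Ω f ≤ E m (fun i => L i g) y + lam * Ω g)
    (hadm : Admissible Ω) :
    ∀ (m : ℕ) (L : Fin m → (B →L[ℝ] ℝ)) (y : Fin m → ℝ), (∀ i, y i ∈ Y) →
      ∀ lam : ℝ, 0 < lam →
      ∃ f : B,
        (∀ g : B, E m (fun i => L i f) y + lam * Ω f ≤ E m (fun i => L i g) y + lam * Ω g) ∧
        ∃ c : Fin m → ℝ, (∑ i, c i • L i) ∈ dualityMap B f := by
  intro m L y hy lam hlam
  obtain ⟨f₀, hf₀⟩ := hmin_exists m L y hy lam hlam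
  obtain ⟨f, hfL, hfΩ, c, hc⟩ := hadm m L (fun i => L i f₀) ⟨f₀, fun _ => rfl⟩
  exact ⟨f, minimizer_of_eq_data_of_le (fun v => E m v y) (fun g i => L i g) Ω hlam.le hf₀
    (funext hfL) (hfΩ f₀ fun _ => rfl), c, hc⟩

/-- If the regularised interpolation problem satisfies the linear
representer theorem (i.e. `Ω` is admissible) and minimisers of the regularisation
problems always exist, then each regularisation problem admits a minimiser whose
dual element lies in the span of the defining functionals. -/
theorem interpolation_representer_implies_regularisation_representer
    {B : Type*} [NormedAddCommGroup B] [NormedSpace ℝ B] [CompleteSpace B]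
    (hrefl : IsReflexive B) (Y : Set ℝ)
    (E : ∀ m : ℕ, (Fin m → ℝ) → (Fin m → ℝ) → ℝ)
    (Ω : B → ℝ)
    (hmin_exists : ∀ (m : ℕ) (L : Fin m → (B →L[ℝ] ℝ)) (y : Fin m → ℝ), (∀ i, y i ∈ Y) →
      ∀ lam : ℝ, 0 < lam →
      ∃ f : B, ∀ g : B,
        E m (fun i => L i f) y + lam * Ω f ≤ E m (fun i => L i g) y + lam * Ω g)
    (hadm : Admissible Ω) :
    ∀ (m : ℕ) (L : Fin m → (B →L[ℝ] ℝ)) (y : Fin m → ℝ), (∀ i, y i ∈ Y) →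
      ∀ lam : ℝ, 0 < lam →
      ∃ f : B,
        (∀ g : B, E m (fun i => L i f) y + lam * Ω f ≤ E m (fun i => L i g) y + lam * Ω g) ∧
        ∃ c : Fin m → ℝ, (∑ i, c i • L i) ∈ dualityMap B f :=
  interpolation_representer_implies_regularisation_representer_general Y E Ω hmin_exists hadm
end

section
/- (Beurling–Livingston) Let V be a real normed linear space with duality mapping J with gauge function μ, and let W be a reflexive closed subspace of V. Then for any fixed x₀ ∈ V and u₀* ∈ V* there exists z ∈ W such that J(x₀ + z) ∩ (W° − u₀*) ≠ ∅, where W° = {L ∈ V* : L(w) = 0 for all w ∈ W} denotes the annihilator of W in V*. -/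
open scoped Classical

/-- A gauge function: continuous, strictly increasing on `[0,∞)`, vanishing at `0` and
tending to infinity. -/
def IsGauge (μ : ℝ → ℝ) : Prop :=
  ContinuousOn μ (Set.Ici 0) ∧ StrictMonoOn μ (Set.Ici 0) ∧ μ 0 = 0 ∧
    Filter.Tendsto μ Filter.atTop Filter.atTop

/-- The duality mapping of a real normed space `V` into its dual with gauge `μ`:
`J(0) = {0}` and for `x ≠ 0`, `J(x) = {L : L x = ‖L‖‖x‖, ‖L‖ = μ(‖x‖)}`. -/
noncomputable def dualityMapGauge {V : Type*} [NormedAddCommGroup V] [NormedSpace ℝ V]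
    (μ : ℝ → ℝ) (x : V) : Set (V →L[ℝ] ℝ) :=
  if x = 0 then {0} else {L : V →L[ℝ] ℝ | L x = ‖L‖ * ‖x‖ ∧ ‖L‖ = μ ‖x‖}

/-! Let `Φ(t) = ∫₀ᵗ μ`: a convex `C¹` function with `Φ' = μ` on `[0, ∞)` and superlinear growth.
The convex, continuous, coercive function `z ↦ Φ ‖x₀ + z‖ + u₀ z` on the reflexive space `W`
attains its minimum at some `z`, because bounded closed convex sets of `W` are weakly compact and
its sublevel sets are closed and convex. At `x = x₀ + z` minimality says that `-u₀` is bounded on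
`W` by the increments `v ↦ Φ ‖x + v‖ - Φ ‖x‖`. Hahn–Banach, applied with the one-sided directional
derivative of this convex function as sublinear majorant, extends `-u₀|_W` to `L ∈ V*` with the
same bound on all of `V`. Differentiating this subgradient inequality along rays gives
`‖L‖ ≤ μ ‖x‖` and `L x = μ ‖x‖ * ‖x‖`, i.e. `L ∈ J(x)`, while `L + u₀` annihilates `W`. -/

open Set Filter Topology Bornology

namespace IsGauge

variable {μ : ℝ → ℝ}

theorem nonneg (hμ : IsGauge μ) {t : ℝ} (ht : 0 ≤ t) : 0 ≤ μ t :=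
  hμ.2.2.1 ▸ hμ.2.1.monotoneOn self_mem_Ici ht ht

theorem continuous_comp_max (hμ : IsGauge μ) : Continuous fun t => μ (max t 0) :=
  hμ.1.comp_continuous (by fun_prop) fun t => le_max_right t 0

theorem monotone_comp_max (hμ : IsGauge μ) : Monotone fun t => μ (max t 0) :=
  fun a b hab => hμ.2.1.monotoneOn (mem_Ici.2 (le_max_right a 0)) (mem_Ici.2 (le_max_right b 0))
    (max_le_max_right 0 hab)

end IsGauge

/-- Extending `μ` by `μ 0 = 0` to negative arguments makes this primitive `C¹` on all of `ℝ`. -/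
noncomputable def gaugePrimitive (μ : ℝ → ℝ) (t : ℝ) : ℝ :=
  ∫ s in (0 : ℝ)..t, μ (max s 0)

section GaugePrimitive

variable {μ : ℝ → ℝ}

theorem hasDerivAt_gaugePrimitive (hμ : IsGauge μ) (t : ℝ) :
    HasDerivAt (gaugePrimitive μ) (μ (max t 0)) t :=
  intervalIntegral.integral_hasDerivAt_right (hμ.continuous_comp_max.intervalIntegrable _ _)
    (hμ.continuous_comp_max.stronglyMeasurableAtFilter _ _) hμ.continuous_comp_max.continuousAt

theorem continuous_gaugePrimitive (hμ : IsGauge μ) : Continuous (gaugePrimitive μ) :=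
  continuous_iff_continuousAt.2 fun t => (hasDerivAt_gaugePrimitive hμ t).continuousAt

theorem deriv_gaugePrimitive (hμ : IsGauge μ) :
    deriv (gaugePrimitive μ) = fun t => μ (max t 0) :=
  funext fun t => (hasDerivAt_gaugePrimitive hμ t).deriv

theorem convexOn_gaugePrimitive (hμ : IsGauge μ) : ConvexOn ℝ univ (gaugePrimitive μ) :=
  Monotone.convexOn_univ_of_deriv (fun t => (hasDerivAt_gaugePrimitive hμ t).differentiableAt)
    (deriv_gaugePrimitive hμ ▸ hμ.monotone_comp_max)

theorem monotone_gaugePrimitive (hμ : IsGauge μ) : Monotone (gaugePrimitive μ) :=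
  monotone_of_deriv_nonneg (fun t => (hasDerivAt_gaugePrimitive hμ t).differentiableAt)
    fun t => deriv_gaugePrimitive hμ ▸ hμ.nonneg (le_max_right t 0)

theorem convexOn_gaugePrimitive_norm (hμ : IsGauge μ) {E : Type*} [SeminormedAddCommGroup E]
    [NormedSpace ℝ E] : ConvexOn ℝ univ fun v : E => gaugePrimitive μ ‖v‖ :=
  ⟨convex_univ, fun _ _ _ _ _ _ ha hb hab =>
    (monotone_gaugePrimitive hμ (convexOn_univ_norm.2 trivial trivial ha hb hab)).trans
      ((convexOn_gaugePrimitive hμ).2 trivial trivial ha hb hab)⟩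

theorem gaugePrimitive_add_mul_sub_le (hμ : IsGauge μ) {a b : ℝ} (ha : 0 ≤ a) (hab : a ≤ b) :
    gaugePrimitive μ a + μ a * (b - a) ≤ gaugePrimitive μ b := by
  rcases hab.eq_or_lt with rfl | hab
  · simp
  have hslope := (convexOn_gaugePrimitive hμ).le_slope_of_hasDerivAt trivial trivial hab
    (hasDerivAt_gaugePrimitive hμ a)
  rw [max_eq_left ha, slope_def_field, le_div_iff₀ (sub_pos.2 hab)] at hslope
  linarith

theorem tendsto_gaugePrimitive_sub_mul_atTop (hμ : IsGauge μ) (c : ℝ) :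
    Tendsto (fun s => gaugePrimitive μ s - c * s) atTop atTop := by
  obtain ⟨T, hμT, hT⟩ := ((hμ.2.2.2.eventually_ge_atTop (c + 1)).and (eventually_ge_atTop 0)).exists
  refine tendsto_atTop_mono' _ ?_
    (tendsto_atTop_add_const_right _ (gaugePrimitive μ T - (c + 1) * T) tendsto_id)
  filter_upwards [eventually_ge_atTop T] with s hs
  have htangent := gaugePrimitive_add_mul_sub_le hμ hT hs
  have hslope := mul_le_mul_of_nonneg_right hμT (sub_nonneg.2 hs)
  simp only [id]
  linarith

end GaugePrimitive

section Reflexive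

variable {B : Type*} [NormedAddCommGroup B] [NormedSpace ℝ B]

theorem Convex.isClosed_toWeakSpace_image {s : Set B} (hs : Convex ℝ s) (hc : IsClosed s) :
    IsClosed (toWeakSpace ℝ B '' s) := by
  have h := hs.toWeakSpace_closure ℝ
  rw [hc.closure_eq] at h
  exact h ▸ isClosed_closure

theorem IsReflexive.isCompact_toWeakSpace_image (hB : IsReflexive B) {s : Set B}
    (hs : Convex ℝ s) (hc : IsClosed s) (hb : IsBounded s) :
    IsCompact (toWeakSpace ℝ B '' s) := by
  have hsurj : Function.Surjective (NormedSpace.inclusionInDoubleDualWeak ℝ B) := by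
    intro Ψ
    obtain ⟨z, hz⟩ := hB (StrongDual.toWeakDual.symm Ψ)
    refine ⟨toWeakSpace ℝ B z, DFunLike.ext _ _ fun φ => ?_⟩
    change NormedSpace.inclusionInDoubleDual ℝ B z φ = Ψ φ
    rw [hz]
    rfl
  have := NormedSpace.isCompact_closure_of_isBounded ℝ B (toWeakSpace ℝ B '' s)
    (by rwa [(toWeakSpace ℝ B).injective.preimage_image]) (by simp [hsurj.range_eq])
  rwa [(hs.isClosed_toWeakSpace_image hc).closure_eq] at this

theorem IsReflexive.exists_forall_le_of_convexOn (hB : IsReflexive B) {f : B → ℝ}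
    (hconv : ConvexOn ℝ univ f) (hcont : Continuous f) (hcoer : Tendsto f (cobounded B) atTop) :
    ∃ z, ∀ z', f z ≤ f z' := by
  set e := toWeakSpace ℝ B
  have hconv_le (c : ℝ) : Convex ℝ {z | f z ≤ c} := by simpa using hconv.convex_le c
  have hclosed_le (c : ℝ) : IsClosed {z | f z ≤ c} := isClosed_le hcont continuous_const
  have hlsc : LowerSemicontinuous (f ∘ e.symm) := by
    refine lowerSemicontinuous_iff_isClosed_preimage.2 fun c => ?_
    convert (hconv_le c).isClosed_toWeakSpace_image (hclosed_le c) using 1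
    rw [e.image_eq_preimage_symm]
    rfl
  have hbdd : IsBounded {z | f z ≤ f 0} := isBounded_def.2 <|
    mem_of_superset (hcoer.eventually_gt_atTop (f 0)) fun z (hz : f 0 < f z) => not_le.2 hz
  have hne : (e '' {z | f z ≤ f 0}).Nonempty := ⟨e 0, 0, le_refl (f 0), rfl⟩
  obtain ⟨_, ⟨y, hy, rfl⟩, hmin⟩ := (hlsc.lowerSemicontinuousOn _).exists_isMinOn hne
    (hB.isCompact_toWeakSpace_image (hconv_le _) (hclosed_le _) hbdd)
  refine ⟨y, fun z => ?_⟩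
  rcases le_or_gt (f z) (f 0) with hz | hz
  · exact hmin ⟨z, hz, rfl⟩
  · exact hy.trans hz.le

end Reflexive

theorem HasDerivWithinAt.le_of_forall_mul_sub_le {φ : ℝ → ℝ} {φ' a c : ℝ}
    (hφ : HasDerivWithinAt φ φ' (Ioi a) a) (h : ∀ y, a < y → c * (y - a) ≤ φ y - φ a) :
    c ≤ φ' := by
  refine ge_of_tendsto ((hasDerivWithinAt_iff_tendsto_slope' self_notMem_Ioi).1 hφ) ?_
  filter_upwards [self_mem_nhdsWithin] with y (hy : a < y)
  rw [slope_def_field, le_div_iff₀ (sub_pos.2 hy)]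
  exact h y hy

noncomputable def rightLineDeriv {E : Type*} [AddCommGroup E] [Module ℝ E] (f : E → ℝ)
    (x v : E) : ℝ :=
  derivWithin (fun t : ℝ => f (x + t • v)) (Ioi 0) 0

namespace ConvexOn

variable {E : Type*} [AddCommGroup E] [Module ℝ E] {f : E → ℝ} {x : E}

theorem comp_line (hf : ConvexOn ℝ univ f) (x v : E) :
    ConvexOn ℝ univ fun t : ℝ => f (x + t • v) :=
  (hf.translate_right x).comp_linearMap (LinearMap.id.smulRight v)

theorem hasDerivWithinAt_rightLineDeriv (hf : ConvexOn ℝ univ f) (x v : E) :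
    HasDerivWithinAt (fun t : ℝ => f (x + t • v)) (rightLineDeriv f x v) (Ioi 0) 0 :=
  (hf.comp_line x v).hasDerivWithinAt_rightDeriv_of_mem_interior (by simp)

theorem rightLineDeriv_le_sub (hf : ConvexOn ℝ univ f) (v : E) :
    rightLineDeriv f x v ≤ f (x + v) - f x := by
  simpa [rightLineDeriv, slope_def_field] using
    (hf.comp_line x v).rightDeriv_le_slope_of_mem_interior (by simp) trivial zero_lt_one

theorem le_rightLineDeriv (hf : ConvexOn ℝ univ f) {v : E} {c : ℝ}
    (h : ∀ t, 0 < t → c * t ≤ f (x + t • v) - f x) : c ≤ rightLineDeriv f x v :=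
  (hf.hasDerivWithinAt_rightLineDeriv x v).le_of_forall_mul_sub_le fun t ht => by
    simpa using h t ht

theorem hasDerivWithinAt_rightLineDeriv_mul (hf : ConvexOn ℝ univ f) (x v : E) {c : ℝ}
    (hc : 0 < c) :
    HasDerivWithinAt (fun t : ℝ => f (x + (c * t) • v)) (rightLineDeriv f x v * c) (Ioi 0) 0 :=
  (hf.hasDerivWithinAt_rightLineDeriv x v).comp_of_eq 0 (hasDerivAt_const_mul c).hasDerivWithinAt
    (fun _ ht => mul_pos hc (mem_Ioi.1 ht)) (mul_zero c).symm

theorem rightLineDeriv_smul (hf : ConvexOn ℝ univ f) (v : E) {c : ℝ} (hc : 0 < c) :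
    rightLineDeriv f x (c • v) = c * rightLineDeriv f x v := by
  have hline : (fun t : ℝ => f (x + t • c • v)) = fun t => f (x + (c * t) • v) := by
    ext t
    simp [smul_smul, mul_comm]
  rw [rightLineDeriv, hline,
    (hf.hasDerivWithinAt_rightLineDeriv_mul x v hc).derivWithin (uniqueDiffWithinAt_Ioi 0),
    mul_comm]

theorem rightLineDeriv_add_le (hf : ConvexOn ℝ univ f) (v w : E) :
    rightLineDeriv f x (v + w) ≤ rightLineDeriv f x v + rightLineDeriv f x w := by
  have hdouble (u : E) := hf.hasDerivWithinAt_rightLineDeriv_mul x u two_pos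
  -- `f (x + t • (v + w))` is at most the mean of `f (x + 2t • v)` and `f (x + 2t • w)`,
  -- with equality at `t = 0`.
  have hgap := (((hdouble v).add (hdouble w)).const_mul (1 / 2 : ℝ)).sub
    (hf.hasDerivWithinAt_rightLineDeriv x (v + w))
  have key := hgap.le_of_forall_mul_sub_le (c := 0) fun t _ => by
    have hmid : (1 / 2 : ℝ) • (x + (2 * t) • v) + (1 / 2 : ℝ) • (x + (2 * t) • w)
        = x + t • (v + w) := by module
    have := hf.2 (mem_univ (x + (2 * t) • v)) (mem_univ (x + (2 * t) • w))
      (by norm_num : (0 : ℝ) ≤ 1 / 2) (by norm_num : (0 : ℝ) ≤ 1 / 2) (by norm_num)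
    rw [hmid, smul_eq_mul, smul_eq_mul] at this
    simp only [Pi.sub_apply, Pi.add_apply, mul_zero, zero_smul, add_zero, zero_mul]
    linarith
  linarith

theorem exists_extension_le_sub [TopologicalSpace E] [IsTopologicalAddGroup E]
    (hf : ConvexOn ℝ univ f) (hfx : ContinuousAt f x) (W : Submodule ℝ E) (ℓ : W →ₗ[ℝ] ℝ)
    (hℓ : ∀ w : W, ℓ w ≤ f (x + w) - f x) :
    ∃ L : E →L[ℝ] ℝ, (∀ w : W, L w = ℓ w) ∧ ∀ v, L v ≤ f (x + v) - f x := by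
  obtain ⟨g, hgℓ, hg⟩ := exists_extension_of_le_sublinear ⟨W, ℓ⟩ (rightLineDeriv f x)
    (fun c hc v => hf.rightLineDeriv_smul v hc) hf.rightLineDeriv_add_le
    fun w => hf.le_rightLineDeriv fun t _ => by simpa [mul_comm] using hℓ (t • w)
  have hle (v : E) : g v ≤ f (x + v) - f x := (hg v).trans (hf.rightLineDeriv_le_sub v)
  have hup : Tendsto (fun v => f (x + v) - f x) (𝓝 0) (𝓝 0) := by
    simpa using
      (hfx.tendsto.comp ((continuous_const_add x).tendsto' 0 x (add_zero x))).sub_const (f x)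
  have hlow : Tendsto (fun v => -(f (x + -v) - f x)) (𝓝 0) (𝓝 0) := by
    simpa using (hup.comp (continuous_neg.tendsto' (0 : E) 0 neg_zero)).neg
  have hcont : Continuous g := continuous_of_tendsto_nhds_zero g <|
    tendsto_of_tendsto_of_tendsto_of_le_of_le hlow hup
      (fun v => by linarith [map_neg g v, hle (-v)]) hle
  exact ⟨⟨g, hcont⟩, hgℓ, hle⟩

end ConvexOn

theorem mem_dualityMapGauge_of_forall_le_sub {V : Type*} [NormedAddCommGroup V]
    [NormedSpace ℝ V] {μ : ℝ → ℝ} (hμ : IsGauge μ) {x : V} {L : V →L[ℝ] ℝ}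
    (hL : ∀ v, L v ≤ gaugePrimitive μ ‖x + v‖ - gaugePrimitive μ ‖x‖) :
    L ∈ dualityMapGauge μ x := by
  set Φ := gaugePrimitive μ
  set r := ‖x‖
  have hΦ {s : ℝ} (hs : 0 ≤ s) : HasDerivAt Φ (μ s) s := by
    simpa [max_eq_left hs] using hasDerivAt_gaugePrimitive hμ s
  have hbound (v : V) : L v ≤ μ r * ‖v‖ := by
    have hray : HasDerivWithinAt (fun t => Φ (r + t * ‖v‖)) (μ r * ‖v‖) (Ioi 0) 0 :=
      ((hΦ (norm_nonneg x)).comp_of_eq 0 ((hasDerivAt_mul_const ‖v‖).const_add r)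
        (by ring)).hasDerivWithinAt
    refine hray.le_of_forall_mul_sub_le fun t ht => ?_
    calc L v * (t - 0) = L (t • v) := by simp [mul_comm]
      _ ≤ Φ ‖x + t • v‖ - Φ r := hL _
      _ ≤ Φ (r + t * ‖v‖) - Φ (r + 0 * ‖v‖) := by
        rw [zero_mul, add_zero]
        gcongr
        refine monotone_gaugePrimitive hμ ((norm_add_le _ _).trans_eq ?_)
        rw [norm_smul, Real.norm_of_nonneg (le_of_lt ht)]
  have hnorm : ‖L‖ ≤ μ r := L.opNorm_le_bound (hμ.nonneg (norm_nonneg x)) fun v => by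
    rw [Real.norm_eq_abs, abs_le]
    constructor
    · have := hbound (-v)
      rw [map_neg, norm_neg] at this
      linarith
    · exact hbound v
  rcases eq_or_ne x 0 with rfl | hx
  · have hL0 : L = 0 := norm_le_zero_iff.1 (hnorm.trans_eq (by simp [r, hμ.2.2.1]))
    simp [dualityMapGauge, hL0]
  have hr : 0 < r := norm_pos_iff.2 hx
  -- the subgradient inequality restricted to the ray through `x`
  have hmin : IsLocalMin (fun s => Φ s - L x / r * s) r := by
    filter_upwards [Ioi_mem_nhds hr] with s (hs : 0 < s)
    have hnorm_s : ‖x + (s / r - 1) • x‖ = s := by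
      rw [show x + (s / r - 1) • x = (s / r) • x by module, norm_smul,
        Real.norm_of_nonneg (by positivity), div_mul_cancel₀ _ hr.ne']
    have := hL ((s / r - 1) • x)
    rw [hnorm_s, map_smul, smul_eq_mul] at this
    have hlin : (s / r - 1) * L x = L x / r * s - L x / r * r := by field_simp
    linarith
  have hLx : L x = μ r * r := by
    have := hmin.hasDerivAt_eq_zero ((hΦ hr.le).sub ((hasDerivAt_id r).const_mul (L x / r)))
    field_simp at this
    linarith
  have hge : μ r ≤ ‖L‖ := by
    refine le_of_mul_le_mul_right ?_ hr
    calc μ r * r = L x := hLx.symm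
      _ ≤ ‖L x‖ := Real.le_norm_self _
      _ ≤ ‖L‖ * r := L.le_opNorm x
  rw [dualityMapGauge, if_neg hx]
  exact ⟨by rw [hLx, le_antisymm hnorm hge], le_antisymm hnorm hge⟩

theorem tendsto_gaugePrimitive_norm_add_add_atTop {V : Type*} [NormedAddCommGroup V]
    [NormedSpace ℝ V] {μ : ℝ → ℝ} (hμ : IsGauge μ) (x₀ : V) (u : V →L[ℝ] ℝ) :
    Tendsto (fun v => gaugePrimitive μ ‖x₀ + v‖ + u v) (cobounded V) atTop := by
  have hv (v : V) : ‖v‖ ≤ ‖x₀ + v‖ + ‖x₀‖ := by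
    simpa using norm_sub_le (x₀ + v) x₀
  have hshift : Tendsto (fun v => ‖x₀ + v‖) (cobounded V) atTop :=
    tendsto_atTop_mono (fun v => by linarith [hv v])
      (tendsto_atTop_add_const_right _ (-‖x₀‖) tendsto_norm_cobounded_atTop)
  refine tendsto_atTop_mono (fun v => ?_) (tendsto_atTop_add_const_right _ (-(‖u‖ * ‖x₀‖))
    ((tendsto_gaugePrimitive_sub_mul_atTop hμ ‖u‖).comp hshift))
  have hu : -(‖u‖ * ‖v‖) ≤ u v := by
    simpa using neg_le_of_abs_le (u.le_opNorm v)
  have huv := mul_le_mul_of_nonneg_left (hv v) (norm_nonneg u)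
  simp only [Function.comp_apply]
  linarith

theorem beurling_livingston_general
    {V : Type*} [NormedAddCommGroup V] [NormedSpace ℝ V]
    (μ : ℝ → ℝ) (hμ : IsGauge μ)
    (W : Submodule ℝ V) (hWrefl : IsReflexive W)
    (x₀ : V) (u₀ : V →L[ℝ] ℝ) :
    ∃ z ∈ W, ∃ L ∈ dualityMapGauge μ (x₀ + z),
      ∃ L' : V →L[ℝ] ℝ, (∀ w ∈ W, L' w = 0) ∧ L = L' - u₀ := by
  set F : V → ℝ := fun v => gaugePrimitive μ ‖v‖
  have hF : ConvexOn ℝ univ F := convexOn_gaugePrimitive_norm hμ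
  have hFc : Continuous F := (continuous_gaugePrimitive hμ).comp continuous_norm
  obtain ⟨z, hz⟩ := hWrefl.exists_forall_le_of_convexOn (f := fun w : W => F (x₀ + w) + u₀ w)
    (((hF.translate_right x₀).comp_linearMap W.subtype).add
      ((u₀.toLinearMap ∘ₗ W.subtype).convexOn convex_univ))
    (by fun_prop)
    ((tendsto_gaugePrimitive_norm_add_add_atTop hμ x₀ u₀).comp
      (tendsto_norm_atTop_iff_cobounded.1 tendsto_norm_cobounded_atTop))
  obtain ⟨L, hLW, hL⟩ := hF.exists_extension_le_sub (hFc.continuousAt (x := x₀ + z)) W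
    (-(u₀.toLinearMap ∘ₗ W.subtype)) fun w => by
      have := hz (z + w)
      simp only [Submodule.coe_add, map_add, ← add_assoc] at this
      simp only [LinearMap.neg_apply, LinearMap.comp_apply, Submodule.subtype_apply,
        ContinuousLinearMap.coe_coe]
      linarith
  refine ⟨z, z.2, L, mem_dualityMapGauge_of_forall_le_sub hμ hL, L + u₀, fun w hw => ?_, by simp⟩
  have hLw := hLW ⟨w, hw⟩
  simp only [LinearMap.neg_apply, LinearMap.comp_apply, Submodule.subtype_apply,
    ContinuousLinearMap.coe_coe] at hLw
  simp [hLw]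

/-- **Beurling–Livingston.** Let `V` be a real normed space with duality mapping
`J` with gauge `μ` and `W` a reflexive closed subspace of `V`. Then for any `x₀ ∈ V` and
`u₀* ∈ V*` there exists `z ∈ W` with `J(x₀ + z) ∩ (W° − u₀*) ≠ ∅`. -/
theorem beurling_livingston
    {V : Type*} [NormedAddCommGroup V] [NormedSpace ℝ V]
    (μ : ℝ → ℝ) (hμ : IsGauge μ)
    (W : Submodule ℝ V) (hWclosed : IsClosed (W : Set V)) (hWrefl : IsReflexive W)
    (x₀ : V) (u₀ : V →L[ℝ] ℝ) :
    ∃ z ∈ W, ∃ L ∈ dualityMapGauge μ (x₀ + z),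
      ∃ L' : V →L[ℝ] ℝ, (∀ w ∈ W, L' w = 0) ∧ L = L' - u₀ :=
  beurling_livingston_general μ hμ W hWrefl x₀ u₀
end

section
/- Let B be a reflexive real Banach space with duality mapping J and let h : [0,∞) → ℝ be nondecreasing. Then the regulariser Ω : B → ℝ defined by Ω(f) = h(‖f‖) is admissible: for any m ∈ ℕ, L₁,…,L_m ∈ B* and y₁,…,y_m ∈ ℝ such that {f ∈ B : L_i(f) = y_i for all i} is nonempty, the problem min{Ω(f) : f ∈ B, L_i(f) = y_i for all i} admits a solution f with Σ_{i=1}^m c_i L_i ∈ J(f) for some c₁,…,c_m ∈ ℝ. -/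
open scoped Classical

/-
A minimiser of the norm on the constraint set `{f | L i f = y i}` is also a minimiser of
`h ‖·‖`. It exists because the norm is weak-* lower semicontinuous on the bidual, the
constraints cut a weak-* compact set out of a ball there (Banach–Alaoglu), and reflexivity
brings the minimiser back to `B`. A minimiser `f` satisfies `‖f‖ ≤ ‖f + n‖` for all `n` in
`N = ⋂ ker L i`, so `‖f‖` is the norm of its class in `B ⧸ N`; Hahn–Banach on the quotient yields an element of `J(f)` vanishing on `N`, hence a combination of the `L i`.
-/

open NormedSpace Metric Set

theorem WeakDual.lowerSemicontinuous_norm_toStrongDual {𝕜 E : Type*} [NontriviallyNormedField 𝕜]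
    [SeminormedAddCommGroup E] [NormedSpace 𝕜 E] :
    LowerSemicontinuous fun Φ : WeakDual 𝕜 E => ‖toStrongDual Φ‖ :=
  lowerSemicontinuous_iff_isClosed_preimage.2 fun r => by
    simpa [preimage, mem_closedBall_zero_iff] using
      WeakDual.isClosed_closedBall (0 : StrongDual 𝕜 E) r

theorem ContinuousLinearMap.exists_sum_smul_eq_of_iInf_ker_le_ker {𝕜 E ι : Type*} [Field 𝕜]
    [TopologicalSpace 𝕜] [IsTopologicalRing 𝕜] [AddCommGroup E] [TopologicalSpace E] [Module 𝕜 E]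
    [Fintype ι] {L : ι → E →L[𝕜] 𝕜} {Λ : E →L[𝕜] 𝕜}
    (h : ⨅ i, LinearMap.ker (L i : E →ₗ[𝕜] 𝕜) ≤ LinearMap.ker (Λ : E →ₗ[𝕜] 𝕜)) :
    ∃ c : ι → 𝕜, ∑ i, c i • L i = Λ := by
  obtain ⟨c, hc⟩ := (Submodule.mem_span_range_iff_exists_fun 𝕜).1 (mem_span_of_iInf_ker_le_ker h)
  exact ⟨c, ContinuousLinearMap.coe_injective (by push_cast; exact hc)⟩

section

variable {E : Type*} [NormedAddCommGroup E] [NormedSpace ℝ E]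

theorem mem_dualityMap_of_norm_le_of_apply_eq {x : E} {Λ : StrongDual ℝ E} (hΛ : ‖Λ‖ ≤ ‖x‖)
    (hΛx : Λ x = ‖x‖ ^ 2) : Λ ∈ dualityMap E x := by
  rw [dualityMap]
  split_ifs with hx
  · simpa [hx] using hΛ
  · have hx' : 0 < ‖x‖ := norm_pos_iff.2 hx
    have hge : ‖x‖ ≤ ‖Λ‖ := by
      have := Λ.le_opNorm x
      rw [hΛx, Real.norm_eq_abs, abs_of_nonneg (by positivity), sq] at this
      exact le_of_mul_le_mul_right this hx'
    have hnorm : ‖Λ‖ = ‖x‖ := le_antisymm hΛ hge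
    exact ⟨by rw [hΛx, hnorm, sq], hnorm⟩

theorem exists_mem_dualityMap_le_ker_of_forall_norm_le_norm_add {N : Submodule ℝ E} {x : E}
    (hx : ∀ n ∈ N, ‖x‖ ≤ ‖x + n‖) :
    ∃ Λ ∈ dualityMap E x, N ≤ LinearMap.ker (Λ : E →ₗ[ℝ] ℝ) := by
  have hmk : ‖(N.mkQ x : E ⧸ N)‖ = ‖x‖ := by
    refine le_antisymm (Submodule.Quotient.norm_mk_le N x) (QuotientAddGroup.le_norm_iff.2 ?_)
    intro m hm
    have hmx : m - x ∈ N := (Submodule.Quotient.eq N).1 hm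
    simpa using hx _ hmx
  obtain ⟨ψ, hψ, hψx⟩ := exists_dual_vector'' ℝ (N.mkQ x)
  refine ⟨‖x‖ • ψ.comp N.mkQL, mem_dualityMap_of_norm_le_of_apply_eq ?_ ?_, fun n hn => ?_⟩
  · refine ContinuousLinearMap.opNorm_le_bound _ (norm_nonneg x) fun v => ?_
    calc ‖(‖x‖ • ψ.comp N.mkQL) v‖ = ‖x‖ * ‖ψ (N.mkQ v)‖ := by simp
      _ ≤ ‖x‖ * (1 * ‖N.mkQ v‖) := by gcongr; exact ψ.le_of_opNorm_le hψ _
      _ ≤ ‖x‖ * ‖v‖ := by gcongr; simpa using Submodule.Quotient.norm_mk_le N v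
  · have hψx' : ψ (Submodule.Quotient.mk x) = ‖x‖ := by rw [← N.mkQ_apply, hψx, hmk]; rfl
    simp [hψx', sq]
  · simp [(Submodule.Quotient.mk_eq_zero N).2 hn]

theorem IsReflexive.exists_isMinOn_norm {ι : Type*} (hrefl : IsReflexive E)
    (L : ι → StrongDual ℝ E) (y : ι → ℝ) (hcons : ∃ f : E, ∀ i, L i f = y i) :
    ∃ f ∈ {g : E | ∀ i, L i g = y i}, IsMinOn (‖·‖) {g : E | ∀ i, L i g = y i} f := by
  obtain ⟨f₀, hf₀⟩ := hcons
  let ι₀ : E → WeakDual ℝ (StrongDual ℝ E) :=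
    fun g => StrongDual.toWeakDual (inclusionInDoubleDual ℝ E g)
  have hι₀ : ∀ g, ‖WeakDual.toStrongDual (ι₀ g)‖ = ‖g‖ := (inclusionInDoubleDualLi ℝ).norm_map
  let K := {Φ | ‖WeakDual.toStrongDual Φ‖ ≤ ‖f₀‖} ∩ {Φ | ∀ i, Φ (L i) = y i}
  have hK : IsCompact K := by
    refine IsCompact.inter_right ?_ ?_
    · simpa [preimage, mem_closedBall_zero_iff] using
        WeakDual.isCompact_closedBall (0 : StrongDual ℝ (StrongDual ℝ E)) ‖f₀‖
    · simpa only [ofPred_forall] using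
        isClosed_iInter fun i => isClosed_eq (WeakDual.eval_continuous (L i)) continuous_const
  have hmemK : ∀ g : E, (∀ i, L i g = y i) → ‖g‖ ≤ ‖f₀‖ → ι₀ g ∈ K := fun g hg hg₀ =>
    ⟨(hι₀ g).trans_le hg₀, hg⟩
  obtain ⟨Φ, ⟨hΦ₀, hΦy⟩, hΦmin⟩ :=
    (WeakDual.lowerSemicontinuous_norm_toStrongDual.lowerSemicontinuousOn K).exists_isMinOn
      ⟨_, hmemK f₀ hf₀ le_rfl⟩ hK
  obtain ⟨f, hf⟩ := hrefl (WeakDual.toStrongDual Φ)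
  obtain rfl : ι₀ f = Φ := congrArg StrongDual.toWeakDual hf
  refine ⟨f, hΦy, isMinOn_iff.2 fun g hg => ?_⟩
  have hf_le : ‖f‖ ≤ ‖f₀‖ := (hι₀ f).symm.trans_le hΦ₀
  rcases le_or_gt ‖g‖ ‖f₀‖ with hg₀ | hg₀
  · simpa only [hι₀] using isMinOn_iff.1 hΦmin _ (hmemK g hg hg₀)
  · exact hf_le.trans hg₀.le

end

theorem nondecreasing_function_of_norm_admissible_general
    {B : Type*} [NormedAddCommGroup B] [NormedSpace ℝ B]
    (hrefl : IsReflexive B) (h : ℝ → ℝ) (hh : MonotoneOn h (Set.Ici 0)) :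
    Admissible (fun f : B => h ‖f‖) := by
  intro m L y hcons
  obtain ⟨f, hfy, hmin⟩ := hrefl.exists_isMinOn_norm L y hcons
  have hbest : ∀ n ∈ ⨅ i, LinearMap.ker (L i : B →ₗ[ℝ] ℝ), ‖f‖ ≤ ‖f + n‖ := fun n hn =>
    hmin fun i => by rw [map_add, hfy i, add_eq_left]; exact (Submodule.mem_iInf _).1 hn i
  obtain ⟨Λ, hΛ, hker⟩ := exists_mem_dualityMap_le_ker_of_forall_norm_le_norm_add hbest
  obtain ⟨c, hc⟩ := ContinuousLinearMap.exists_sum_smul_eq_of_iInf_ker_le_ker hker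
  exact ⟨f, hfy, fun g hg => hh (norm_nonneg f) (norm_nonneg g) (hmin hg), c, hc ▸ hΛ⟩

/-- On a reflexive real Banach space, any nondecreasing function of the norm
is an admissible regulariser. -/
theorem nondecreasing_function_of_norm_admissible
    {B : Type*} [NormedAddCommGroup B] [NormedSpace ℝ B] [CompleteSpace B]
    (hrefl : IsReflexive B) (h : ℝ → ℝ) (hh : MonotoneOn h (Set.Ici 0)) :
    Admissible (fun f : B => h ‖f‖) :=
  nondecreasing_function_of_norm_admissible_general hrefl h hh
end

section
/- Let X = ℓ¹(ℕ, ℝ) with dual X* = ℓ∞(ℕ, ℝ), and let J denote the duality mapping of X into X*. Define L₁ = (x_i)_{i∈ℕ} ∈ ℓ∞ by x_i = i/(i+1) for i odd and x_i = 0 for i even, and L₂ = (y_i)_{i∈ℕ} ∈ ℓ∞ by y_i = i/(i+1) for i even and y_i = 0 for i odd. Then ‖L₁‖_∞ = ‖L₂‖_∞ = 1, there is no x ∈ ℓ¹ with ‖x‖₁ = 1 such that L₁(x) = 1 or L₂(x) = 1, and span{L₁, L₂} ∩ J(X) = {0}, where J(X) = ⋃_{x ∈ X} J(x). -/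
open scoped Classical

/-!
A functional on `ℓ¹` with coefficient sequence `b` has norm `sup |bᵢ|`, and it attains its norm
on the unit sphere only if the supremum is attained: if `|bᵢ| < ‖L‖` for every `i`, then
`L x = ∑ bᵢ xᵢ < ‖L‖ ∑ |xᵢ| = ‖L‖ ‖x‖` for `x ≠ 0`, so `L` lies in no `J(x)`.
A combination `c L₁ + d L₂` has coefficients `i/(i+1) · w i` with `w` the `2`-periodic
sequence `d, c, d, c, …`; since `i/(i+1) → 1`, its norm is `max |c| |d|`, which no
coefficient reaches. Non-attainment for `L₁, L₂` is then a special case: a norm-one functional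
with `L x = 1 = ‖x‖` lies in `J(x)`.
-/

open Filter Topology

theorem mem_dualityMap_of_apply_eq_one {B : Type*} [NormedAddCommGroup B] [NormedSpace ℝ B]
    {L : B →L[ℝ] ℝ} {x : B} (hL : ‖L‖ = 1) (hx : ‖x‖ = 1) (hLx : L x = 1) :
    L ∈ dualityMap B x := by
  have hx₀ : x ≠ 0 := norm_ne_zero_iff.mp (hx ▸ one_ne_zero)
  simp only [dualityMap, if_neg hx₀, Set.mem_ofPred_eq, hL, hx, hLx, mul_one, and_self]

theorem apply_ne_one_of_inter_iUnion_dualityMap_eq_zero {B : Type*} [NormedAddCommGroup B]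
    [NormedSpace ℝ B] {S : Set (B →L[ℝ] ℝ)} (hS : S ∩ ⋃ x, dualityMap B x = {0})
    {L : B →L[ℝ] ℝ} (hL : L ∈ S) (hL₁ : ‖L‖ = 1) {x : B} (hx : ‖x‖ = 1) : L x ≠ 1 := by
  intro hLx
  have hmem : L ∈ S ∩ ⋃ x, dualityMap B x :=
    ⟨hL, Set.mem_iUnion.mpr ⟨x, mem_dualityMap_of_apply_eq_one hL₁ hx hLx⟩⟩
  rw [hS, Set.mem_singleton_iff] at hmem
  simp [hmem] at hL₁

local notation "ℓ¹" ι => lp (fun _ : ι => ℝ) 1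

namespace lp

variable {ι : Type*}

theorem summable_abs_of_one (x : ℓ¹ ι) : Summable fun i => |x i| := by
  simpa [Real.norm_eq_abs] using (lp.memℓp x).summable (p := 1) one_pos

theorem norm_eq_tsum_abs_of_one (x : ℓ¹ ι) : ‖x‖ = ∑' i, |x i| := by
  simpa [Real.norm_eq_abs] using lp.norm_eq_tsum_rpow (p := 1) one_pos x

theorem summable_abs_mul_of_abs_le {b : ι → ℝ} {C : ℝ} (hC : ∀ i, |b i| ≤ C) (x : ℓ¹ ι) :
    Summable fun i => |b i * x i| :=
  .of_nonneg_of_le (fun _ => abs_nonneg _)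
    (fun i => by rw [abs_mul]; exact mul_le_mul_of_nonneg_right (hC i) (abs_nonneg _))
    ((summable_abs_of_one x).mul_left C)

end lp

def HasCoeffs {ι : Type*} (L : (ℓ¹ ι) →L[ℝ] ℝ) (b : ι → ℝ) : Prop :=
  ∀ x, L x = ∑' i, b i * x i

namespace HasCoeffs

variable {ι : Type*} {L L' : (ℓ¹ ι) →L[ℝ] ℝ} {b b' : ι → ℝ}

theorem abs_le_opNorm (hL : HasCoeffs L b) (i : ι) : |b i| ≤ ‖L‖ := by
  have hsingle : L (lp.single 1 i 1) = b i := by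
    rw [hL, tsum_eq_single i fun j hj => by rw [lp.single_apply_ne 1 i _ hj, mul_zero],
      lp.single_apply_self, mul_one]
  simpa [hsingle, lp.norm_single] using L.le_opNorm (lp.single 1 i (1 : ℝ))

theorem summable_mul (hL : HasCoeffs L b) (x : ℓ¹ ι) : Summable fun i => b i * x i :=
  .of_abs (lp.summable_abs_mul_of_abs_le hL.abs_le_opNorm x)

theorem add (hL : HasCoeffs L b) (hL' : HasCoeffs L' b') : HasCoeffs (L + L') (b + b') := by
  intro x
  simp only [add_apply, Pi.add_apply, add_mul, hL x, hL' x,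
    (hL.summable_mul x).tsum_add (hL'.summable_mul x)]

theorem smul (hL : HasCoeffs L b) (c : ℝ) : HasCoeffs (c • L) (c • b) := by
  intro x
  simp only [smul_apply, Pi.smul_apply, smul_eq_mul, hL x, mul_assoc,
    tsum_mul_left]

theorem opNorm_le {C : ℝ} (hL : HasCoeffs L b) (hC₀ : 0 ≤ C) (hC : ∀ i, |b i| ≤ C) :
    ‖L‖ ≤ C := by
  refine L.opNorm_le_bound hC₀ fun x => ?_
  calc ‖L x‖ = |∑' i, b i * x i| := by rw [hL, Real.norm_eq_abs]
    _ ≤ ∑' i, |b i * x i| := by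
        have := norm_tsum_le_tsum_norm (f := fun i => b i * x i)
          (by simpa only [Real.norm_eq_abs] using lp.summable_abs_mul_of_abs_le hC x)
        simpa only [Real.norm_eq_abs] using this
    _ ≤ ∑' i, C * |x i| := by
        refine (lp.summable_abs_mul_of_abs_le hC x).tsum_le_tsum (fun i => ?_)
          ((lp.summable_abs_of_one x).mul_left C)
        rw [abs_mul]
        exact mul_le_mul_of_nonneg_right (hC i) (abs_nonneg _)
    _ = C * ‖x‖ := by rw [tsum_mul_left, lp.norm_eq_tsum_abs_of_one]

theorem apply_lt_opNorm_mul_norm (hL : HasCoeffs L b) (hb : ∀ i, |b i| < ‖L‖) {x : ℓ¹ ι}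
    (hx : x ≠ 0) : L x < ‖L‖ * ‖x‖ := by
  obtain ⟨j, hj⟩ : ∃ j, x j ≠ 0 := by
    by_contra! h
    exact hx (lp.ext (funext h))
  have hle : ∀ i, b i * x i ≤ ‖L‖ * |x i| := fun i =>
    (le_abs_self _).trans ((abs_mul _ _).trans_le
      (mul_le_mul_of_nonneg_right (hb i).le (abs_nonneg _)))
  have hlt : b j * x j < ‖L‖ * |x j| :=
    (le_abs_self _).trans_lt ((abs_mul _ _).trans_lt
      (mul_lt_mul_of_pos_right (hb j) (abs_pos.mpr hj)))
  rw [hL, lp.norm_eq_tsum_abs_of_one, ← tsum_mul_left]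
  exact (hL.summable_mul x).tsum_lt_tsum hle hlt ((lp.summable_abs_of_one x).mul_left _)

theorem notMem_dualityMap (hL : HasCoeffs L b) (hb : ∀ i, |b i| < ‖L‖) (hL₀ : L ≠ 0)
    (x : ℓ¹ ι) : L ∉ dualityMap (ℓ¹ ι) x := by
  unfold dualityMap
  split_ifs with hx
  · exact hL₀
  · rintro ⟨hLx, -⟩
    exact (hL.apply_lt_opNorm_mul_norm hb hx).ne hLx

section Periodic

variable {L : (ℓ¹ ℕ) →L[ℝ] ℝ} {r w : ℕ → ℝ} {p : ℕ}

theorem abs_le_opNorm_of_periodic (hL : HasCoeffs L fun i => r i * w i)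
    (hw : Function.Periodic w p) (hp : 0 < p) (hr : Tendsto r atTop (𝓝 1)) (i : ℕ) :
    |w i| ≤ ‖L‖ := by
  have hshift : Tendsto (fun k => i + k * p) atTop atTop :=
    tendsto_atTop_mono (fun k => le_add_left (Nat.le_mul_of_pos_right k hp)) tendsto_id
  have hlim : Tendsto (fun k => |r (i + k * p) * w (i + k * p)|) atTop (𝓝 |w i|) := by
    have hwk : ∀ k, w (i + k * p) = w i := fun k => by simpa using hw.nat_mul k i
    simp only [hwk, abs_mul]
    simpa using ((hr.comp hshift).abs).mul_const |w i|
  exact le_of_tendsto' hlim fun k => hL.abs_le_opNorm _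

theorem abs_lt_opNorm_of_periodic (hL : HasCoeffs L fun i => r i * w i)
    (hw : Function.Periodic w p) (hp : 0 < p) (hr : Tendsto r atTop (𝓝 1))
    (hr₁ : ∀ i, |r i| < 1) (hL₀ : L ≠ 0) (i : ℕ) : |r i * w i| < ‖L‖ :=
  calc |r i * w i| = |r i| * |w i| := abs_mul _ _
    _ ≤ |r i| * ‖L‖ := mul_le_mul_of_nonneg_left (hL.abs_le_opNorm_of_periodic hw hp hr i)
        (abs_nonneg _)
    _ < ‖L‖ := mul_lt_of_lt_one_left (norm_pos_iff.mpr hL₀) (hr₁ i)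

theorem opNorm_eq_of_periodic (hL : HasCoeffs L fun i => r i * w i)
    (hw : Function.Periodic w p) (hp : 0 < p) (hr : Tendsto r atTop (𝓝 1))
    (hr₁ : ∀ i, |r i| ≤ 1) {C : ℝ} (hwC : ∀ i, |w i| ≤ C) {j : ℕ} (hj : |w j| = C) :
    ‖L‖ = C := by
  refine le_antisymm (hL.opNorm_le (hj ▸ abs_nonneg _) fun i => ?_)
    (hj ▸ hL.abs_le_opNorm_of_periodic hw hp hr j)
  rw [abs_mul]
  exact (mul_le_of_le_one_left (abs_nonneg _) (hr₁ i)).trans (hwC i)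

end Periodic

end HasCoeffs

theorem abs_natCast_div_add_one_lt_one (n : ℕ) : |(n : ℝ) / (n + 1)| < 1 := by
  rw [abs_of_nonneg (by positivity), div_lt_one (by positivity)]
  linarith

theorem periodic_ite_odd (c d : ℝ) :
    Function.Periodic (fun i : ℕ => if Odd i then c else d) 2 := by
  intro i
  simp [Nat.odd_add]

section OddEven

variable {L₁ L₂ : (ℓ¹ ℕ) →L[ℝ] ℝ} {r : ℕ → ℝ}

theorem hasCoeffs_smul_add_smul {a₁ a₂ : ℕ → ℝ}
    (ha₁ : ∀ i : ℕ, a₁ i = if Odd i then (i : ℝ) / (i + 1) else 0)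
    (ha₂ : ∀ i : ℕ, a₂ i = if Even i then (i : ℝ) / (i + 1) else 0)
    (hL₁ : HasCoeffs L₁ a₁) (hL₂ : HasCoeffs L₂ a₂) (c d : ℝ) :
    HasCoeffs (c • L₁ + d • L₂) fun i => (i : ℝ) / (i + 1) * if Odd i then c else d := by
  convert (hL₁.smul c).add (hL₂.smul d) using 1
  funext i
  rcases Nat.even_or_odd i with h | h
  · simp [ha₁, ha₂, h, mul_comm, Nat.not_odd_iff_even.mpr h]
  · simp [ha₁, ha₂, h, mul_comm, Nat.not_even_iff_odd.mpr h]

theorem opNorm_smul_add_smul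
    (hL : ∀ c d : ℝ, HasCoeffs (c • L₁ + d • L₂) fun i => r i * if Odd i then c else d)
    (hr : Tendsto r atTop (𝓝 1)) (hr₁ : ∀ i, |r i| ≤ 1) (c d : ℝ) :
    ‖c • L₁ + d • L₂‖ = max |c| |d| := by
  have hw : ∀ i : ℕ, |if Odd i then c else d| ≤ max |c| |d| := fun i => by
    split_ifs
    exacts [le_max_left _ _, le_max_right _ _]
  rcases le_total |c| |d| with h | h
  · exact (hL c d).opNorm_eq_of_periodic (periodic_ite_odd c d) two_pos hr hr₁ hw (j := 0)
      (by simp [max_eq_right h])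
  · exact (hL c d).opNorm_eq_of_periodic (periodic_ite_odd c d) two_pos hr hr₁ hw (j := 1)
      (by simp [max_eq_left h])

theorem span_pair_inter_iUnion_dualityMap_eq_zero
    (hL : ∀ c d : ℝ, HasCoeffs (c • L₁ + d • L₂) fun i => r i * if Odd i then c else d)
    (hr : Tendsto r atTop (𝓝 1)) (hr₁ : ∀ i, |r i| < 1) :
    (Submodule.span ℝ {L₁, L₂} : Set ((ℓ¹ ℕ) →L[ℝ] ℝ)) ∩ ⋃ x, dualityMap (ℓ¹ ℕ) x = {0} := by
  ext L
  simp only [Set.mem_inter_iff, Set.mem_iUnion, Set.mem_singleton_iff, SetLike.mem_coe,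
    Submodule.mem_span_pair]
  constructor
  · rintro ⟨⟨c, d, rfl⟩, x, hx⟩
    by_contra hL₀
    exact (hL c d).notMem_dualityMap
      ((hL c d).abs_lt_opNorm_of_periodic (periodic_ite_odd c d) two_pos hr hr₁ hL₀) hL₀ x hx
  · rintro rfl
    exact ⟨⟨0, 0, by simp⟩, 0, by simp [dualityMap]⟩

end OddEven

/-- In `X = ℓ¹` (non-reflexive, dual `ℓ∞`) the functionals
`L₁ = (1/2, 0, 3/4, 0, …)` and `L₂ = (0, 2/3, 0, 4/5, …)` have norm `1`, do not attain their
norm on the unit sphere, and `span{L₁, L₂} ∩ J(X) = {0}`. -/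
theorem ell_one_span_meets_dualityMap_trivially
    (a₁ a₂ : ℕ → ℝ)
    (ha₁ : ∀ i : ℕ, a₁ i = if Odd i then (i : ℝ) / (i + 1) else 0)
    (ha₂ : ∀ i : ℕ, a₂ i = if Even i then (i : ℝ) / (i + 1) else 0)
    (L₁ L₂ : lp (fun _ : ℕ => ℝ) 1 →L[ℝ] ℝ)
    (hL₁ : ∀ x : lp (fun _ : ℕ => ℝ) 1, L₁ x = ∑' i : ℕ, a₁ i * x i)
    (hL₂ : ∀ x : lp (fun _ : ℕ => ℝ) 1, L₂ x = ∑' i : ℕ, a₂ i * x i) :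
    ‖L₁‖ = 1 ∧ ‖L₂‖ = 1 ∧
    (¬ ∃ x : lp (fun _ : ℕ => ℝ) 1, ‖x‖ = 1 ∧ (L₁ x = 1 ∨ L₂ x = 1)) ∧
    (Submodule.span ℝ {L₁, L₂} : Set (lp (fun _ : ℕ => ℝ) 1 →L[ℝ] ℝ)) ∩
        (⋃ x : lp (fun _ : ℕ => ℝ) 1, dualityMap (lp (fun _ : ℕ => ℝ) 1) x) = {0} := by
  have hL := hasCoeffs_smul_add_smul ha₁ ha₂ hL₁ hL₂
  have hr : Tendsto (fun n : ℕ => (n : ℝ) / (n + 1)) atTop (𝓝 1) :=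
    tendsto_natCast_div_add_atTop 1
  have hr₁ := abs_natCast_div_add_one_lt_one
  have hnorm₁ : ‖L₁‖ = 1 := by
    simpa using opNorm_smul_add_smul hL hr (fun i => (hr₁ i).le) 1 0
  have hnorm₂ : ‖L₂‖ = 1 := by
    simpa using opNorm_smul_add_smul hL hr (fun i => (hr₁ i).le) 0 1
  have hspan := span_pair_inter_iUnion_dualityMap_eq_zero hL hr hr₁
  refine ⟨hnorm₁, hnorm₂, ?_, hspan⟩
  rintro ⟨x, hx, h | h⟩
  · exact apply_ne_one_of_inter_iUnion_dualityMap_eq_zero hspan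
      (Submodule.subset_span (by simp)) hnorm₁ hx h
  · exact apply_ne_one_of_inter_iUnion_dualityMap_eq_zero hspan
      (Submodule.subset_span (by simp)) hnorm₂ hx h
end

section
/- Let V be a real normed linear space with duality mapping J with gauge function μ, and define M : V → ℝ by M(x) = ∫₀^{‖x‖} μ(t) dt. Then M is convex, and for any x ∈ V with x ≠ 0 the subdifferential of M at x equals the duality map value: ∂M(x) = J(x), where ∂M(x) = {x* ∈ V* : M(y) ≥ M(x) + x*(y − x) for all y ∈ V}. -/
/-!
Put `φ r = ∫₀^r μ`. Since `μ` is monotone, `μ r` is a subgradient of `φ` at every `r ≥ 0`; hence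
any `L` with `L x = ‖L‖ ‖x‖` and `‖L‖ = μ ‖x‖` satisfies
`M x + L (y - x) ≤ M x + μ ‖x‖ (‖y‖ - ‖x‖) ≤ M y`, i.e. `J x ⊆ ∂M x`. By Hahn–Banach `J x` is
nonempty at every `x`, so `M` has an affine minorant touching it everywhere and is convex.

Conversely, a subgradient `L` of `M` at `x ≠ 0` is maximal at `x` on the sphere of radius `‖x‖`,
which forces `L x = ‖L‖ ‖x‖`. On the ray through `x` it then makes `‖L‖` a subgradient of `φ` at
`‖x‖ > 0`, where `φ` has derivative `μ ‖x‖`, so `‖L‖ = μ ‖x‖`.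
-/

open scoped Classical

open Filter Topology

section Gauge

variable {μ : ℝ → ℝ}

theorem intervalIntegrable_of_continuousOn_Ici (hcont : ContinuousOn μ (Set.Ici 0)) {a b : ℝ}
    (ha : 0 ≤ a) (hb : 0 ≤ b) : IntervalIntegrable μ MeasureTheory.volume a b :=
  (hcont.mono fun _ ht => le_min ha hb |>.trans ht.1).intervalIntegrable

theorem mul_sub_le_integral_of_monotoneOn (hcont : ContinuousOn μ (Set.Ici 0))
    (hmono : MonotoneOn μ (Set.Ici 0)) {a b : ℝ} (ha : 0 ≤ a) (hb : 0 ≤ b) :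
    μ a * (b - a) ≤ ∫ t in a..b, μ t := by
  have hint := intervalIntegrable_of_continuousOn_Ici hcont ha hb
  rcases le_total a b with hab | hba
  · have := intervalIntegral.integral_mono_on hab intervalIntegrable_const hint
      fun t ht => hmono ha (ha.trans ht.1) ht.1
    simpa [mul_comm] using this
  · have := intervalIntegral.integral_mono_on hba hint.symm intervalIntegrable_const
      fun t ht => hmono (hb.trans ht.1) ha ht.2
    rw [intervalIntegral.integral_symm]
    simp only [intervalIntegral.integral_const, smul_eq_mul] at this
    linarith

theorem integral_add_mul_sub_le_integral (hcont : ContinuousOn μ (Set.Ici 0))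
    (hmono : MonotoneOn μ (Set.Ici 0)) {r s : ℝ} (hr : 0 ≤ r) (hs : 0 ≤ s) :
    (∫ t in (0 : ℝ)..r, μ t) + μ r * (s - r) ≤ ∫ t in (0 : ℝ)..s, μ t := by
  rw [← intervalIntegral.integral_add_adjacent_intervals
    (intervalIntegrable_of_continuousOn_Ici hcont le_rfl hr)
    (intervalIntegrable_of_continuousOn_Ici hcont hr hs)]
  linarith [mul_sub_le_integral_of_monotoneOn hcont hmono hr hs]

theorem hasDerivAt_integral_of_continuousOn_Ici (hcont : ContinuousOn μ (Set.Ici 0)) {r : ℝ}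
    (hr : 0 < r) : HasDerivAt (fun s => ∫ t in (0 : ℝ)..s, μ t) (μ r) r :=
  intervalIntegral.integral_hasDerivAt_right
    (intervalIntegrable_of_continuousOn_Ici hcont le_rfl hr.le)
    ((hcont.mono Set.Ioi_subset_Ici_self).stronglyMeasurableAtFilter isOpen_Ioi r hr)
    (hcont.continuousAt (Ici_mem_nhds hr))

end Gauge

theorem HasDerivAt.eq_of_eventually_add_mul_sub_le {f : ℝ → ℝ} {f' c r : ℝ}
    (hf : HasDerivAt f f' r) (hsub : ∀ᶠ s in 𝓝 r, f r + c * (s - r) ≤ f s) : c = f' := by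
  have hmin : IsLocalMin (fun s => f s - c * s) r :=
    hsub.mono fun s hs => by linarith
  linarith [hmin.hasDerivAt_eq_zero (hf.sub ((hasDerivAt_id' r).const_mul c))]

theorem convexOn_univ_of_forall_exists_subgradient {E : Type*} [AddCommGroup E] [Module ℝ E]
    {f : E → ℝ} (hf : ∀ x, ∃ g : E →ₗ[ℝ] ℝ, ∀ y, f x + g (y - x) ≤ f y) :
    ConvexOn ℝ Set.univ f := by
  refine ⟨convex_univ, fun x _ y _ a b ha hb hab => ?_⟩
  obtain ⟨g, hg⟩ := hf (a • x + b • y)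
  have hx := mul_le_mul_of_nonneg_left (hg x) ha
  have hy := mul_le_mul_of_nonneg_left (hg y) hb
  have hcomb : a * g (x - (a • x + b • y)) + b * g (y - (a • x + b • y)) = 0 := by
    simp only [map_sub, map_add, map_smul, smul_eq_mul]
    linear_combination (-(a * g x + b * g y)) * hab
  have hsplit : a * f (a • x + b • y) + b * f (a • x + b • y) = f (a • x + b • y) := by
    rw [← add_mul, hab, one_mul]
  simp only [smul_eq_mul]
  linarith

section NormedSpace

variable {E : Type*} [NormedAddCommGroup E] [NormedSpace ℝ E]

theorem ContinuousLinearMap.apply_eq_opNorm_mul_of_forall_norm_eq_le {L : E →L[ℝ] ℝ} {x : E}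
    (hx : x ≠ 0) (hmax : ∀ v, ‖v‖ = ‖x‖ → L v ≤ L x) : L x = ‖L‖ * ‖x‖ := by
  have hxn : 0 < ‖x‖ := norm_pos_iff.mpr hx
  have hbound : ∀ v, L v ≤ L x / ‖x‖ * ‖v‖ := by
    intro v
    rcases eq_or_ne v 0 with rfl | hv
    · simp
    have hvn : 0 < ‖v‖ := norm_pos_iff.mpr hv
    have hw := hmax ((‖x‖ / ‖v‖) • v) (by
      rw [norm_smul, Real.norm_of_nonneg (by positivity), div_mul_cancel₀ _ hvn.ne'])
    rw [map_smul, smul_eq_mul, div_mul_eq_mul_div, div_le_iff₀ hvn] at hw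
    rw [div_mul_eq_mul_div, le_div_iff₀ hxn]
    linarith
  have hLx : 0 ≤ L x := by linarith [hmax (-x) (norm_neg x), map_neg L x]
  refine le_antisymm ((le_abs_self _).trans (L.le_opNorm x)) ?_
  have hnorm : ‖L‖ ≤ L x / ‖x‖ := by
    refine L.opNorm_le_bound (by positivity) fun v => abs_le.mpr ⟨?_, hbound v⟩
    have h := hbound (-v)
    rw [map_neg, norm_neg] at h
    linarith
  rwa [le_div_iff₀ hxn] at hnorm

variable {φ : ℝ → ℝ}

theorem add_apply_sub_le_of_apply_eq_opNorm_mul {L : E →L[ℝ] ℝ} {x : E}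
    (hφ : ∀ s, 0 ≤ s → φ ‖x‖ + ‖L‖ * (s - ‖x‖) ≤ φ s) (hLx : L x = ‖L‖ * ‖x‖) (y : E) :
    φ ‖x‖ + L (y - x) ≤ φ ‖y‖ := by
  have hLy : L y ≤ ‖L‖ * ‖y‖ := (le_abs_self _).trans (L.le_opNorm y)
  rw [map_sub, hLx]
  linarith [hφ ‖y‖ (norm_nonneg y)]

theorem apply_eq_opNorm_mul_and_opNorm_eq_of_forall_add_apply_sub_le {L : E →L[ℝ] ℝ} {x : E}
    {d : ℝ} (hφ : HasDerivAt φ d ‖x‖) (hx : x ≠ 0) (hsub : ∀ y, φ ‖x‖ + L (y - x) ≤ φ ‖y‖) :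
    L x = ‖L‖ * ‖x‖ ∧ ‖L‖ = d := by
  have hxn : 0 < ‖x‖ := norm_pos_iff.mpr hx
  have hLx : L x = ‖L‖ * ‖x‖ :=
    L.apply_eq_opNorm_mul_of_forall_norm_eq_le hx fun v hv => by
      have h := hsub v
      rw [hv, map_sub] at h
      linarith
  have hray : ∀ᶠ s in 𝓝 ‖x‖, φ ‖x‖ + ‖L‖ * (s - ‖x‖) ≤ φ s := by
    filter_upwards [eventually_ge_nhds hxn] with s hs
    have hnorm : ‖(s / ‖x‖) • x‖ = s := by
      rw [norm_smul, Real.norm_of_nonneg (by positivity), div_mul_cancel₀ _ hxn.ne']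
    have hL : L ((s / ‖x‖) • x - x) = ‖L‖ * (s - ‖x‖) := by
      rw [map_sub, map_smul, smul_eq_mul, hLx]
      field_simp
    simpa only [hnorm, hL] using hsub ((s / ‖x‖) • x)
  exact ⟨hLx, hφ.eq_of_eventually_add_mul_sub_le hray⟩

end NormedSpace

section DualityMap

variable {V : Type*} [NormedAddCommGroup V] [NormedSpace ℝ V] {μ : ℝ → ℝ}

theorem mem_dualityMapGauge_iff (hμ0 : μ 0 = 0) {x : V} {L : V →L[ℝ] ℝ} :
    L ∈ dualityMapGauge μ x ↔ L x = ‖L‖ * ‖x‖ ∧ ‖L‖ = μ ‖x‖ := by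
  unfold dualityMapGauge
  split_ifs with hx
  · simp [hx, hμ0]
  · rfl

theorem dualityMapGauge_nonempty (hμ0 : μ 0 = 0) {x : V} (hμx : 0 ≤ μ ‖x‖) :
    (dualityMapGauge μ x).Nonempty := by
  rcases eq_or_ne x 0 with rfl | hx
  · exact ⟨0, by simp [dualityMapGauge]⟩
  obtain ⟨g, hg, hgx⟩ := exists_dual_vector ℝ x (norm_ne_zero_iff.mpr hx)
  refine ⟨μ ‖x‖ • g, (mem_dualityMapGauge_iff hμ0).2 ?_⟩
  have hnorm : ‖μ ‖x‖ • g‖ = μ ‖x‖ := by rw [norm_smul, hg, Real.norm_of_nonneg hμx, mul_one]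
  rw [hnorm, smul_apply, hgx, smul_eq_mul]
  exact ⟨rfl, rfl⟩

end DualityMap

/-- For `M(x) = ∫₀^{‖x‖} μ(t) dt`, the functional `M` is convex and for
every `x ≠ 0` its subdifferential equals the duality map value: `∂M(x) = J(x)`. -/
theorem subdifferential_of_integral_functional_eq_dualityMap
    {V : Type*} [NormedAddCommGroup V] [NormedSpace ℝ V]
    (μ : ℝ → ℝ) (hμ : IsGauge μ)
    (M : V → ℝ) (hM : ∀ x : V, M x = ∫ t in (0 : ℝ)..‖x‖, μ t) :
    ConvexOn ℝ Set.univ M ∧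
    ∀ x : V, x ≠ 0 →
      {xs : V →L[ℝ] ℝ | ∀ y : V, M x + xs (y - x) ≤ M y} = dualityMapGauge μ x := by
  obtain ⟨hcont, hsmono, hμ0, -⟩ := hμ
  have hmono := hsmono.monotoneOn
  obtain rfl : M = fun x => ∫ t in (0 : ℝ)..‖x‖, μ t := funext hM
  set φ : ℝ → ℝ := fun r => ∫ t in (0 : ℝ)..r, μ t
  have hJ : ∀ (x : V), ∀ L ∈ dualityMapGauge μ x, ∀ y, φ ‖x‖ + L (y - x) ≤ φ ‖y‖ := by
    intro x L hL
    obtain ⟨hLx, hLμ⟩ := (mem_dualityMapGauge_iff hμ0).1 hL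
    refine add_apply_sub_le_of_apply_eq_opNorm_mul (fun s hs => ?_) hLx
    rw [hLμ]
    exact integral_add_mul_sub_le_integral hcont hmono (norm_nonneg x) hs
  refine ⟨convexOn_univ_of_forall_exists_subgradient fun x => ?_, fun x hx => ?_⟩
  · have hμx : 0 ≤ μ ‖x‖ := hμ0 ▸ hmono Set.self_mem_Ici (norm_nonneg x) (norm_nonneg x)
    obtain ⟨L, hL⟩ := dualityMapGauge_nonempty hμ0 hμx
    exact ⟨L, hJ x L hL⟩
  · ext L
    refine ⟨fun hL => (mem_dualityMapGauge_iff hμ0).2 ?_, hJ x L⟩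
    exact apply_eq_opNorm_mul_and_opNorm_eq_of_forall_add_apply_sub_le
      (hasDerivAt_integral_of_continuousOn_Ici hcont (norm_pos_iff.mpr hx)) hx hL
end

section
/- Let B be a reflexive real Banach space with duality mapping J, let L₁,…,L_m ∈ B* and set Z = ⋂_{i=1}^m ker(L_i). Then for every f₀ ∈ B there exists f_T ∈ Z such that J(f₀ + f_T) ∩ span{L₁,…,L_m} ≠ ∅, i.e. there exist c₁,…,c_m ∈ ℝ with Σ_{i=1}^m c_i L_i ∈ J(f₀ + f_T). -/
open scoped Classical

/-! Let `M = span {Lᵢ} ⊆ B*`. By Hahn–Banach, evaluation at `f₀` restricted to `M` extends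
without increasing its norm to an element of `B**`, which by reflexivity is evaluation at some
`f : B`; thus `f - f₀ ∈ Z` and `‖f‖` is the norm of that restricted evaluation. As `M` is
finite-dimensional, the restricted evaluation attains its norm at some `K ∈ M` with `‖K‖ ≤ 1`,
so `K f = ‖f‖` and `‖f‖ • K ∈ J(f) ∩ M`. -/

theorem ContinuousLinearMap.exists_norm_le_one_apply_eq_opNorm {E : Type*} [NormedAddCommGroup E]
    [NormedSpace ℝ E] [FiniteDimensional ℝ E] (φ : StrongDual ℝ E) :
    ∃ x : E, ‖x‖ ≤ 1 ∧ φ x = ‖φ‖ := by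
  obtain ⟨x, hx, hφx⟩ : ‖φ‖ ∈ (fun x => ‖φ x‖) '' Metric.closedBall 0 1 :=
    φ.sSup_unitClosedBall_eq_norm ▸ ((isCompact_closedBall 0 1).image (by fun_prop)).sSup_mem
      ((Metric.nonempty_closedBall.2 zero_le_one).image _)
  rw [mem_closedBall_zero_iff] at hx
  rcases (abs_eq (norm_nonneg φ)).1 hφx with h | h
  · exact ⟨x, hx, h⟩
  · exact ⟨-x, by rwa [norm_neg], by rw [map_neg, h, neg_neg]⟩

theorem Submodule.exists_extension_apply_eq_norm {E : Type*} [NormedAddCommGroup E]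
    [NormedSpace ℝ E] (M : Submodule ℝ E) [FiniteDimensional ℝ M] (φ : StrongDual ℝ M) :
    ∃ g : StrongDual ℝ E, (∀ x : M, g x = φ x) ∧ ∃ x : M, ‖x‖ ≤ 1 ∧ g x = ‖g‖ := by
  obtain ⟨g, hg, hg_norm⟩ := exists_extension_norm_eq M φ
  obtain ⟨x, hx, hφx⟩ := φ.exists_norm_le_one_apply_eq_opNorm
  exact ⟨g, hg, x, hx, by rw [hg, hφx, hg_norm]⟩

theorem norm_smul_mem_dualityMap {B : Type*} [NormedAddCommGroup B] [NormedSpace ℝ B]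
    {K : StrongDual ℝ B} {x : B} (hK : ‖K‖ ≤ 1) (hKx : K x = ‖x‖) : ‖x‖ • K ∈ dualityMap B x := by
  rcases eq_or_ne x 0 with rfl | hx
  · simp [dualityMap]
  have hK_norm : ‖K‖ = 1 := by
    refine le_antisymm hK (le_of_mul_le_mul_right ?_ (norm_pos_iff.2 hx))
    calc 1 * ‖x‖ = K x := by rw [one_mul, hKx]
      _ ≤ ‖K‖ * ‖x‖ := (le_abs_self _).trans (K.le_opNorm x)
  have hxK_norm : ‖‖x‖ • K‖ = ‖x‖ := by rw [norm_smul, norm_norm, hK_norm, mul_one]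
  simp only [dualityMap, if_neg hx, Set.mem_ofPred_eq, hxK_norm, smul_apply, hKx, smul_eq_mul,
    and_true]

theorem exists_kernel_shift_with_dual_in_span_general
    {B : Type*} [NormedAddCommGroup B] [NormedSpace ℝ B]
    (hrefl : IsReflexive B) {m : ℕ} (L : Fin m → (B →L[ℝ] ℝ)) (f₀ : B) :
    ∃ fT : B, (∀ i, L i fT = 0) ∧
      ∃ c : Fin m → ℝ, (∑ i, c i • L i) ∈ dualityMap B (f₀ + fT) := by
  let M : Submodule ℝ (StrongDual ℝ B) := Submodule.span ℝ (Set.range L)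
  have : FiniteDimensional ℝ M := .span_of_finite ℝ (Set.finite_range L)
  obtain ⟨g, hg, K, hK_norm, hgK⟩ :=
    M.exists_extension_apply_eq_norm ((NormedSpace.inclusionInDoubleDual ℝ B f₀).comp M.subtypeL)
  obtain ⟨f, rfl⟩ := hrefl g
  have hf : ∀ K : M, (K : StrongDual ℝ B) f = (K : StrongDual ℝ B) f₀ := hg
  obtain ⟨c, hc⟩ := (Submodule.mem_span_range_iff_exists_fun ℝ).1 (M.smul_mem ‖f‖ K.2)
  refine ⟨f - f₀, fun i => ?_, c, ?_⟩
  · simpa [sub_eq_zero] using hf ⟨L i, Submodule.subset_span (Set.mem_range_self i)⟩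
  · rw [add_sub_cancel, hc]
    refine norm_smul_mem_dualityMap (K := (K : StrongDual ℝ B)) hK_norm ?_
    exact hgK.trans ((NormedSpace.inclusionInDoubleDualLi ℝ).norm_map f)

/-- In a reflexive real Banach space, for any `L₁,…,L_m ∈ B*` and any
`f₀ ∈ B` there exists `f_T ∈ Z = ⋂ᵢ ker Lᵢ` such that
`J(f₀ + f_T) ∩ span{L₁,…,L_m} ≠ ∅`. -/
theorem exists_kernel_shift_with_dual_in_span
    {B : Type*} [NormedAddCommGroup B] [NormedSpace ℝ B] [CompleteSpace B]
    (hrefl : IsReflexive B) {m : ℕ} (L : Fin m → (B →L[ℝ] ℝ)) (f₀ : B) :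
    ∃ fT : B, (∀ i, L i fT = 0) ∧
      ∃ c : Fin m → ℝ, (∑ i, c i • L i) ∈ dualityMap B (f₀ + fT) :=
  exists_kernel_shift_with_dual_in_span_general hrefl L f₀
end

section
/- Let B be a reflexive real Banach space with duality mapping J, let L₁,…,L_m ∈ B*, and suppose f₀ ∈ B satisfies: there exist c₁,…,c_m ∈ ℝ with L̂ = Σ_{i=1}^m c_i L_i ∈ J(f₀). Then for every g ∈ Z = ⋂_{i=1}^m ker(L_i) one has ‖f₀‖ ≤ ‖f₀ + g‖; moreover, if ‖f₀‖ = ‖f₀ + g‖ then ‖f₀‖ = ‖f₀ + t·g‖ for all t ∈ [0,1], i.e. f₀ and f₀ + g lie on a straight segment of the sphere of radius ‖f₀‖ centred at the origin. -/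
open scoped Classical

/-! If `Λ ∈ J(f₀)` vanishes on `g`, then `‖f₀‖² = Λ (f₀ + g) ≤ ‖f₀‖ ‖f₀ + g‖`. Applied to `t • g`,
this makes `‖f₀‖` a lower bound for the norm along the segment from `f₀` to `f₀ + g`; convexity
of the norm bounds it above by `‖f₀‖` when both endpoints have norm `‖f₀‖`. -/

theorem norm_le_norm_add_of_mem_dualityMap {B : Type*} [NormedAddCommGroup B] [NormedSpace ℝ B]
    {f g : B} {Λ : B →L[ℝ] ℝ} (hΛ : Λ ∈ dualityMap B f) (hg : Λ g = 0) : ‖f‖ ≤ ‖f + g‖ := by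
  by_cases hf : f = 0
  · simp [hf]
  rw [dualityMap, if_neg hf] at hΛ
  obtain ⟨hΛf, hΛnorm⟩ := hΛ
  refine le_of_mul_le_mul_left ?_ (norm_pos_iff.mpr hf)
  calc ‖f‖ * ‖f‖ = Λ (f + g) := by rw [map_add, hg, add_zero, hΛf, hΛnorm]
    _ ≤ ‖Λ‖ * ‖f + g‖ := (le_abs_self _).trans (Λ.le_opNorm _)
    _ = ‖f‖ * ‖f + g‖ := by rw [hΛnorm]

theorem norm_add_smul_le_one_sub_mul_add_mul {E : Type*} [SeminormedAddCommGroup E]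
    [NormedSpace ℝ E] (f g : E) {t : ℝ} (ht : t ∈ Set.Icc (0 : ℝ) 1) :
    ‖f + t • g‖ ≤ (1 - t) * ‖f‖ + t * ‖f + g‖ := by
  have hfg : f + t • g = (1 - t) • f + t • (f + g) := by module
  simpa only [hfg, smul_eq_mul] using
    (convexOn_norm convex_univ).2 (Set.mem_univ f) (Set.mem_univ (f + g))
      (sub_nonneg.mpr ht.2) ht.1 (sub_add_cancel 1 t)

theorem norm_nondecreasing_on_kernel_shifts_general
    {B : Type*} [NormedAddCommGroup B] [NormedSpace ℝ B]
    {m : ℕ} (L : Fin m → (B →L[ℝ] ℝ)) (f₀ : B)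
    (c : Fin m → ℝ) (hc : (∑ i, c i • L i) ∈ dualityMap B f₀) :
    ∀ g : B, (∀ i, L i g = 0) →
      ‖f₀‖ ≤ ‖f₀ + g‖ ∧
      (‖f₀‖ = ‖f₀ + g‖ → ∀ t ∈ Set.Icc (0 : ℝ) 1, ‖f₀ + t • g‖ = ‖f₀‖) := by
  intro g hg
  have hker : ∀ t : ℝ, (∑ i, c i • L i) (t • g) = 0 := by simp [hg]
  have hmin : ∀ t : ℝ, ‖f₀‖ ≤ ‖f₀ + t • g‖ := fun t =>
    norm_le_norm_add_of_mem_dualityMap hc (hker t)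
  refine ⟨by simpa using hmin 1, fun heq t ht => le_antisymm ?_ (hmin t)⟩
  calc ‖f₀ + t • g‖ ≤ (1 - t) * ‖f₀‖ + t * ‖f₀ + g‖ :=
        norm_add_smul_le_one_sub_mul_add_mul f₀ g ht
    _ = ‖f₀‖ := by rw [← heq]; ring

/-- If `L̂ = Σ cᵢ Lᵢ ∈ J(f₀)` then for every `g ∈ Z = ⋂ᵢ ker Lᵢ` one has
`‖f₀‖ ≤ ‖f₀ + g‖`; moreover if `‖f₀‖ = ‖f₀ + g‖` then `‖f₀‖ = ‖f₀ + t g‖` for all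
`t ∈ [0,1]`, i.e. `f₀` and `f₀ + g` lie on a straight segment of the sphere of radius
`‖f₀‖`. -/
theorem norm_nondecreasing_on_kernel_shifts
    {B : Type*} [NormedAddCommGroup B] [NormedSpace ℝ B] [CompleteSpace B]
    (hrefl : IsReflexive B) {m : ℕ} (L : Fin m → (B →L[ℝ] ℝ)) (f₀ : B)
    (c : Fin m → ℝ) (hc : (∑ i, c i • L i) ∈ dualityMap B f₀) :
    ∀ g : B, (∀ i, L i g = 0) →
      ‖f₀‖ ≤ ‖f₀ + g‖ ∧
      (‖f₀‖ = ‖f₀ + g‖ → ∀ t ∈ Set.Icc (0 : ℝ) 1, ‖f₀ + t • g‖ = ‖f₀‖) :=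
  norm_nondecreasing_on_kernel_shifts_general L f₀ c hc
end
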